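/- Let r be a positive integer and let p be a positive divisor of r. If p is odd or r/p is odd, then G(r,p,1,2) ≅ G(r,1,p,2); that is, the complex reflection group G(r,p,2) is isomorphic to the quotient of G(r,2) = (ℤ/rℤ)² ⋊ S₂ by its central cyclic subgroup of scalar elements of order p. -/

import Mathlib

open SemidirectProduct Multiplicative

/-- The action of `Equiv.Perm (Fin n)` on `(ℤ/rℤ)ⁿ` (written multiplicatively)
by permuting coordinates: `(π • x) i = x (π⁻¹ i)`. -/
def permAct (r n : ℕ) : Equiv.Perm (Fin n) →* MulAut (Multiplicative (Fin n → ZMod r)) where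
  toFun π := AddEquiv.toMultiplicative
    { Equiv.arrowCongr π (Equiv.refl (ZMod r)) with
      map_add' := fun _ _ => rfl }
  map_one' := by ext x; rfl
  map_mul' := by intro π σ; ext x; rfl

/-- The wreath product `G(r,n) = (ℤ/rℤ)ⁿ ⋊ Sₙ`. -/
abbrev GG (r n : ℕ) :=
  SemidirectProduct (Multiplicative (Fin n → ZMod r)) (Equiv.Perm (Fin n)) (permAct r n)

/-- Summing the coordinates, as a homomorphism. -/
def sumHom (r n : ℕ) : Multiplicative (Fin n → ZMod r) →* Multiplicative (ZMod r) where
  toFun x := ofAdd (∑ i, toAdd x i)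
  map_one' := by simp
  map_mul' x y := by
    simp [Finset.sum_add_distrib, ofAdd_add]

/-- `Δ : G(r,n) → ℤ/rℤ`, the sum of the "colors" of an element. -/
def DeltaHom (r n : ℕ) : GG r n →* Multiplicative (ZMod r) :=
  SemidirectProduct.lift (sumHom r n) 1 (by
    intro g
    refine MonoidHom.ext fun x => ?_
    show ofAdd (∑ i, toAdd x (g.symm i)) = _
    rw [Equiv.sum_comp g.symm (toAdd x)]
    simp [sumHom])

/-- The subgroup `p·(ℤ/rℤ)` of `ℤ/rℤ` (written multiplicatively). -/
def pZ (r p : ℕ) : Subgroup (Multiplicative (ZMod r)) :=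
  AddSubgroup.toSubgroup (AddSubgroup.zmultiples (p : ZMod r))

/-- The reflection group `G(r,p,n)` as a subgroup of `G(r,n)`. -/
def Grpn (r p n : ℕ) : Subgroup (GG r n) := (pZ r p).comap (DeltaHom r n)

/-- The scalar element `c = (1,(1,…,1))` of `G(r,n)`. -/
def cEl (r n : ℕ) : GG r n := inl (ofAdd fun _ => (1 : ZMod r))

/-- The cyclic subgroup `C_q = ⟨c^{r/q}⟩` of `G(r,n)`. -/
def CsubQ (r q n : ℕ) : Subgroup (GG r n) := Subgroup.zpowers (cEl r n ^ (r / q))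

/-- `C_q` viewed as a subgroup of `G(r,p,n)`. -/
def CsubIn (r p q n : ℕ) : Subgroup ↥(Grpn r p n) :=
  (CsubQ r q n).comap (Grpn r p n).subtype

lemma cEl_mem_center (r n : ℕ) : cEl r n ∈ Subgroup.center (GG r n) := by
  rw [Subgroup.mem_center_iff]
  intro g
  have h1 : (permAct r n g.right) (ofAdd fun _ => (1 : ZMod r)) =
      ofAdd fun _ => (1 : ZMod r) := rfl
  refine SemidirectProduct.ext ?_ ?_
  · simp [mul_left, cEl, h1, mul_comm]
  · simp [mul_right, cEl]

lemma CsubQ_le_center (r q n : ℕ) : CsubQ r q n ≤ Subgroup.center (GG r n) :=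
  Subgroup.zpowers_le.mpr (pow_mem (cEl_mem_center r n) _)

instance CsubIn_normal (r p q n : ℕ) : (CsubIn r p q n).Normal := by
  constructor
  intro x hx g
  have hx' : (x : GG r n) ∈ CsubQ r q n := hx
  have hc := Subgroup.mem_center_iff.mp (CsubQ_le_center r q n hx') (g : GG r n)
  have key : ((g * x * g⁻¹ : ↥(Grpn r p n)) : GG r n) = (x : GG r n) := by
    push_cast
    rw [hc]
    group
  show ((g * x * g⁻¹ : ↥(Grpn r p n)) : GG r n) ∈ CsubQ r q n
  rw [key]
  exact hx'

/-- The projective reflection group `G(r,p,q,n) = G(r,p,n)/C_q`. -/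
abbrev Gpq (r p q n : ℕ) := ↥(Grpn r p n) ⧸ CsubIn r p q n

/-- The quotient map `G(r,p,n) → G(r,p,q,n)`. -/
def Gmk (r p q n : ℕ) : ↥(Grpn r p n) →* Gpq r p q n := QuotientGroup.mk' (CsubIn r p q n)

open scoped Classical in
/-- The image in `G(r,p,q,n)` of an element of `G(r,n)` (junk value `1` if it does
not lie in `G(r,p,n)`). -/
noncomputable def toGpq (r p q n : ℕ) (g : GG r n) : Gpq r p q n :=
  if h : g ∈ Grpn r p n then Gmk r p q n ⟨g, h⟩ else 1

/-!
For integers `d, b` with `d + 2b = p`, the endomorphism `x ↦ d x + b (x₀ + x₁) (1, 1)` of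
`(ℤ/rℤ)²` commutes with the swap of coordinates, so together with the identity of `S₂` it gives
an endomorphism `Θ` of `G(r,2)`. It multiplies `Δ` by `p`; when `b` is coprime to `d` and `d` is
coprime to `m = r/p`, its image is all of `G(r,p,2)` and its kernel is `⟨c^m⟩ = C_p`, whence
`G(r,2)/C_p ≅ G(r,p,2)`. Such `d, b` exist when `p` or `m` is odd: `d = 1` for odd `p`, and
`d = 2` or `d = 4` (according to `p ≡ 0` or `2` mod `4`) for even `p` and odd `m`.
-/

namespace SemidirectProduct

variable {N₁ N₂ G : Type*} [Group N₁] [Group N₂] [Group G]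
  {φ₁ : G →* MulAut N₁} {φ₂ : G →* MulAut N₂} (f : N₁ →* N₂)
  (hf : ∀ g : G, f.comp (φ₁ g).toMonoidHom = (φ₂ (MonoidHom.id G g)).toMonoidHom.comp f)

theorem ker_map_id : (map f (MonoidHom.id G) hf).ker = f.ker.map inl := by
  ext ⟨n, g⟩
  simp only [MonoidHom.mem_ker, Subgroup.mem_map]
  constructor
  · intro h
    have hn : f n = 1 := congrArg left h
    have hg : g = 1 := congrArg right h
    exact ⟨n, hn, by ext <;> simp [hg]⟩
  · rintro ⟨n', hn', h⟩
    rw [← h]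
    ext <;> simp [hn']

theorem mem_range_map_id {x : N₂ ⋊[φ₂] G} :
    x ∈ (map f (MonoidHom.id G) hf).range ↔ x.left ∈ f.range := by
  constructor
  · rintro ⟨y, rfl⟩
    exact ⟨y.left, rfl⟩
  · rintro ⟨n, hn⟩
    exact ⟨⟨n, x.right⟩, by ext <;> simp [hn]⟩

end SemidirectProduct

section ScalarAddAllOnes

variable {R : Type*} [CommRing R]

/-- The matrix `d • 1 + b • J` acting on `Rⁿ`, where `J` is the all-ones matrix. -/
def scalarAddAllOnes (n : ℕ) (d b : R) : (Fin n → R) →+ (Fin n → R) where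
  toFun x i := d * x i + b * ∑ j, x j
  map_zero' := by ext; simp
  map_add' x y := by ext; simp only [Pi.add_apply, Finset.sum_add_distrib]; ring

theorem scalarAddAllOnes_comp_perm {n : ℕ} (d b : R) (π : Equiv.Perm (Fin n)) (x : Fin n → R) :
    scalarAddAllOnes n d b (x ∘ π) = scalarAddAllOnes n d b x ∘ π := by
  ext i
  simp [scalarAddAllOnes, Equiv.sum_comp π x]

variable {d b m : R}

theorem scalarAddAllOnes_two_apply (x : Fin 2 → R) (i : Fin 2) :
    scalarAddAllOnes 2 d b x i = d * x i + b * (x 0 + x 1) := by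
  simp [scalarAddAllOnes, Fin.sum_univ_two]

theorem scalarAddAllOnes_two_eq_zero_iff (hbd : IsCoprime b d) (hdm : IsCoprime d m)
    (hpm : (d + 2 * b) * m = 0) (x : Fin 2 → R) :
    scalarAddAllOnes 2 d b x = 0 ↔ x 1 = x 0 ∧ (d + 2 * b) * x 0 = 0 := by
  obtain ⟨u, v, huv⟩ := hbd
  obtain ⟨e, f, hef⟩ := hdm
  simp only [funext_iff, Fin.forall_fin_two, scalarAddAllOnes_two_apply, Pi.zero_apply]
  constructor
  · rintro ⟨h0, h1⟩
    have hd : d * (x 0 - x 1) = 0 := by linear_combination h0 - h1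
    -- `(d + 2b) d x₀ = b d (x₀ - x₁) = 0`, and `d` is invertible modulo `m`
    have hpx : (d + 2 * b) * x 0 = 0 := by
      linear_combination e * d * h0 + e * b * hd + f * x 0 * hpm - (d + 2 * b) * x 0 * hef
    -- `b (x₀ - x₁)` and `d (x₀ - x₁)` both vanish, and `b, d` are coprime
    exact ⟨by linear_combination u * (h0 - hpx) - v * hd + (x 0 - x 1) * huv, hpx⟩
  · rintro ⟨hx, hpx⟩
    rw [hx]
    exact ⟨by linear_combination hpx, by linear_combination hpx⟩

theorem mem_range_scalarAddAllOnes_two_iff (hbd : IsCoprime b d) (hdm : IsCoprime d m)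
    (hpm : (d + 2 * b) * m = 0) (y : Fin 2 → R) :
    y ∈ (scalarAddAllOnes 2 d b).range ↔ ∃ s, y 0 + y 1 = (d + 2 * b) * s := by
  constructor
  · rintro ⟨x, rfl⟩
    exact ⟨x 0 + x 1, by simp only [scalarAddAllOnes_two_apply]; ring⟩
  · rintro ⟨s, hs⟩
    obtain ⟨u, v, huv⟩ := hbd
    obtain ⟨e, f, hef⟩ := hdm
    -- `(v, u - v) ↦ (1, _)` as `u b + v d = 1`, and `(-b, d + b) ↦ (0, d (d + 2b))`, where the
    -- factor `d` is cancelled by `e` since `e d ≡ 1` modulo `m`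
    set t := e * (s - u * y 0)
    refine ⟨![v * y 0 - b * t, (u - v) * y 0 + (d + b) * t],
      funext (Fin.forall_fin_two.mpr ⟨?_, ?_⟩)⟩
    all_goals simp only [scalarAddAllOnes_two_apply, Matrix.cons_val_zero, Matrix.cons_val_one,
      Matrix.cons_val_fin_one]
    · linear_combination y 0 * huv
    · linear_combination -hs - y 0 * huv + (s - u * y 0) * (d + 2 * b) * hef
        - (s - u * y 0) * f * hpm

end ScalarAddAllOnes

theorem ZMod.natCast_mul_eq_zero_iff_mem_zmultiples {p m : ℕ} (hp : p ≠ 0) (x : ZMod (p * m)) :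
    (p : ZMod (p * m)) * x = 0 ↔ x ∈ AddSubgroup.zmultiples (m : ZMod (p * m)) := by
  rw [AddSubgroup.mem_zmultiples_iff]
  constructor
  · obtain ⟨k, rfl⟩ := ZMod.intCast_surjective x
    intro h
    rw [← Int.cast_natCast, ← Int.cast_mul, ZMod.intCast_zmod_eq_zero_iff_dvd, Nat.cast_mul,
      mul_dvd_mul_iff_left (by exact_mod_cast hp)] at h
    obtain ⟨j, rfl⟩ := h
    exact ⟨j, by rw [zsmul_eq_mul]; push_cast; ring⟩
  · rintro ⟨j, rfl⟩
    rw [mul_smul_comm, ← Nat.cast_mul, ZMod.natCast_self, smul_zero]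

section ZModRankTwo

variable {p m : ℕ} {d b : ZMod (p * m)}

theorem ker_scalarAddAllOnes_two (hp : p ≠ 0) (hdb : d + 2 * b = p) (hbd : IsCoprime b d)
    (hdm : IsCoprime d m) :
    (scalarAddAllOnes 2 d b).ker = AddSubgroup.zmultiples (m : Fin 2 → ZMod (p * m)) := by
  have hpm : (d + 2 * b) * m = 0 := by rw [hdb, ← Nat.cast_mul, ZMod.natCast_self]
  ext x
  rw [AddMonoidHom.mem_ker, scalarAddAllOnes_two_eq_zero_iff hbd hdm hpm, hdb,
    ZMod.natCast_mul_eq_zero_iff_mem_zmultiples hp, AddSubgroup.mem_zmultiples_iff,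
    AddSubgroup.mem_zmultiples_iff]
  constructor
  · rintro ⟨hx, k, hk⟩
    exact ⟨k, funext <| Fin.forall_fin_two.mpr ⟨hk, hx ▸ hk⟩⟩
  · rintro ⟨k, rfl⟩
    exact ⟨rfl, k, rfl⟩

theorem mem_range_scalarAddAllOnes_two (hdb : d + 2 * b = p) (hbd : IsCoprime b d)
    (hdm : IsCoprime d m) (y : Fin 2 → ZMod (p * m)) :
    y ∈ (scalarAddAllOnes 2 d b).range ↔
      ∑ i, y i ∈ AddSubgroup.zmultiples (p : ZMod (p * m)) := by
  have hpm : (d + 2 * b) * m = 0 := by rw [hdb, ← Nat.cast_mul, ZMod.natCast_self]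
  rw [mem_range_scalarAddAllOnes_two_iff hbd hdm hpm, Fin.sum_univ_two, hdb,
    AddSubgroup.mem_zmultiples_iff]
  constructor
  · rintro ⟨s, hs⟩
    obtain ⟨k, rfl⟩ := ZMod.intCast_surjective s
    exact ⟨k, by rw [hs, zsmul_eq_mul]; ring⟩
  · rintro ⟨k, hk⟩
    exact ⟨k, by rw [← hk, zsmul_eq_mul]; ring⟩

end ZModRankTwo

theorem exists_coprime_coeffs {p m : ℕ} (h : Odd p ∨ Odd m) :
    ∃ d b : ℤ, d + 2 * b = p ∧ IsCoprime b d ∧ IsCoprime d m := by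
  rcases Nat.even_or_odd p with ⟨c, rfl⟩ | ⟨k, rfl⟩
  · have hm : Odd (m : ℤ) := by
      rcases h with h | h
      · exact absurd h (by simp)
      · exact_mod_cast h.natCast
    rcases Nat.even_or_odd c with ⟨k, rfl⟩ | ⟨k, rfl⟩
    · refine ⟨2, 2 * k - 1, by push_cast; ring, ?_, Int.isCoprime_two_left.mpr hm⟩
      exact Int.isCoprime_two_right.mpr ⟨k - 1, by ring⟩
    · refine ⟨2 ^ 2, 2 * k - 1, by push_cast; ring, ?_,
        (Int.isCoprime_two_left.mpr hm).pow_left⟩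
      exact (Int.isCoprime_two_right.mpr ⟨k - 1, by ring⟩).pow_right
  · exact ⟨1, k, by push_cast; ring, isCoprime_one_right, isCoprime_one_left⟩

theorem mem_Grpn_iff {r p n : ℕ} {x : GG r n} :
    x ∈ Grpn r p n ↔ ∑ i, toAdd x.left i ∈ AddSubgroup.zmultiples (p : ZMod r) :=
  iff_of_eq (congrArg (· ∈ pZ r p) (mul_one (sumHom r n x.left)))

theorem Grpn_one_eq_top (r n : ℕ) : Grpn r 1 n = ⊤ := by
  refine eq_top_iff.mpr fun x _ => mem_Grpn_iff.mpr ?_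
  obtain ⟨k, hk⟩ := ZMod.intCast_surjective (∑ i, toAdd x.left i)
  rw [← hk, Nat.cast_one]
  exact AddSubgroup.intCast_mem_zmultiples_one k

theorem CsubQ_one_eq_bot (r n : ℕ) : CsubQ r 1 n = ⊥ := by
  rw [CsubQ, Nat.div_one, cEl, ← map_pow, Subgroup.zpowers_eq_bot, ← ofAdd_nsmul]
  convert inl.map_one
  ext
  simp

theorem nonempty_mulEquiv_of_range_ker {r p n : ℕ} (Θ : GG r n →* GG r n)
    (hrange : Θ.range = Grpn r p n) (hker : Θ.ker = CsubQ r p n) :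
    Nonempty (Gpq r p 1 n ≃* Gpq r 1 p n) := by
  have hmem (g : GG r n) : Θ g ∈ Grpn r p n := hrange ▸ ⟨g, rfl⟩
  let f : ↥(Grpn r 1 n) →* Gpq r p 1 n :=
    (Gmk r p 1 n).comp ((Θ.codRestrict _ hmem).comp (Grpn r 1 n).subtype)
  have hsurj : Function.Surjective f := by
    refine (QuotientGroup.mk'_surjective _).comp fun h => ?_
    obtain ⟨g, hg⟩ : (h : GG r n) ∈ Θ.range := hrange.symm ▸ h.2
    exact ⟨⟨g, Grpn_one_eq_top r n ▸ Subgroup.mem_top g⟩, Subtype.ext hg⟩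
  have hker_f : f.ker = CsubIn r 1 p n := by
    ext g
    rw [MonoidHom.mem_ker, MonoidHom.comp_apply, Gmk, QuotientGroup.mk'_apply,
      QuotientGroup.eq_one_iff]
    show Θ g ∈ CsubQ r 1 n ↔ (g : GG r n) ∈ CsubQ r p n
    rw [CsubQ_one_eq_bot, Subgroup.mem_bot, ← hker, MonoidHom.mem_ker]
  exact ⟨((QuotientGroup.quotientMulEquivOfEq hker_f.symm).trans
    (QuotientGroup.quotientKerEquivOfSurjective f hsurj)).symm⟩

def mapColors {r n : ℕ} (φ : (Fin n → ZMod r) →+ (Fin n → ZMod r))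
    (hφ : ∀ (π : Equiv.Perm (Fin n)) x, φ (x ∘ π) = φ x ∘ π) : GG r n →* GG r n :=
  SemidirectProduct.map (AddMonoidHom.toMultiplicative φ) (MonoidHom.id _) fun π =>
    MonoidHom.ext fun x => congrArg ofAdd (hφ π.symm (toAdd x))

section MapColors

variable {r n : ℕ} (φ : (Fin n → ZMod r) →+ (Fin n → ZMod r))
  (hφ : ∀ (π : Equiv.Perm (Fin n)) x, φ (x ∘ π) = φ x ∘ π)

theorem range_mapColors {p : ℕ}
    (hrange : ∀ y, y ∈ φ.range ↔ ∑ i, y i ∈ AddSubgroup.zmultiples (p : ZMod r)) :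
    (mapColors φ hφ).range = Grpn r p n := by
  ext x
  rw [mapColors, SemidirectProduct.mem_range_map_id, mem_Grpn_iff]
  exact hrange (toAdd x.left)

theorem ker_mapColors {q : ℕ}
    (hker : φ.ker = AddSubgroup.zmultiples ((r / q : ℕ) : Fin n → ZMod r)) :
    (mapColors φ hφ).ker = CsubQ r q n := by
  rw [mapColors, SemidirectProduct.ker_map_id, CsubQ, cEl, ← map_pow, ← MonoidHom.map_zpowers,
    ← ofAdd_nsmul, ← Pi.one_def, nsmul_one, MonoidHom.coe_toMultiplicative_ker, hker]
  rfl

end MapColors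

/-- If `p` or `r/p` is odd, then `G(r,p,1,2) ≅ G(r,1,p,2)`. -/
theorem Gpq_rank_two_self_dual
    (r p : ℕ) (hr : 0 < r) (hp : p ∣ r)
    (hodd : Odd p ∨ Odd (r / p)) :
    Nonempty (Gpq r p 1 2 ≃* Gpq r 1 p 2) := by
  obtain ⟨m, rfl⟩ := hp
  have hp0 : p ≠ 0 := by rintro rfl; simp at hr
  have hdiv : p * m / p = m := Nat.mul_div_cancel_left m (Nat.pos_of_ne_zero hp0)
  rw [hdiv] at hodd
  obtain ⟨d, b, hdb, hbd, hdm⟩ := exists_coprime_coeffs hodd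
  have hdb' : (d : ZMod (p * m)) + 2 * b = p := by
    exact_mod_cast congrArg (Int.cast : ℤ → ZMod (p * m)) hdb
  have hbd' := hbd.intCast (R := ZMod (p * m))
  have hdm' : IsCoprime (d : ZMod (p * m)) m := by exact_mod_cast hdm.intCast (R := ZMod (p * m))
  exact nonempty_mulEquiv_of_range_ker (mapColors _ (scalarAddAllOnes_comp_perm _ _))
    (range_mapColors _ _ (mem_range_scalarAddAllOnes_two hdb' hbd' hdm'))
    (ker_mapColors _ _ (by rw [hdiv]; exact ker_scalarAddAllOnes_two hp0 hdb' hbd' hdm'))
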